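/- arXiv:1401.7476 — 2 statements merged into one kernel-verified Lean document; each statement's English description precedes it below -/
import Mathlib

section
/- Every vertex of the permutohedron arises as a vertex of the cyclopermutohedron: for n ≥ 3 and every point v ∈ ℝ^n whose coordinates are a permutation of (1, 2, …, n), there exists ξ ∈ ℝ^n with pairwise distinct coordinates satisfying n·ξ_i ≠ ξ_1 + ⋯ + ξ_n for every i, such that Π_n^ξ is a singleton {u} and u − Σ_{i : n·ξ_i > ξ_1 + ⋯ + ξ_n} R_i = v. -/
/-!
Let `v` be the vertex of `Π_n` given by the permutation `σ`, and let `i₀` be the index with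
`v i₀ = 1`. Rotating values, `π = finRotate⁻¹ ∘ σ` gives the vertex `u` with `u i₀ = n` and
`u i = v i - 1` otherwise, so that `u - R_{i₀} = v`. Take `ξ i = n ^ π i`: its coordinates are
ordered like those of `u`, so by the strict rearrangement inequality `u` is the unique maximizer
of `⟪·, ξ⟫` among the vertices, and hence `Π_n^ξ = {u}`. Since `∑_{k<n} n^k < n^n` while
`n · n^k ≤ n^(n-1)` for `k < n - 1`, the largest coordinate `ξ i₀ = n^(n-1)` is the only one
exceeding the mean of `ξ`, and no coordinate equals it.
-/

open scoped Pointwise RealInnerProductSpace BigOperators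

noncomputable section

/-- The face of a set `K` in direction `ξ`: points of `K` maximizing `⟪·, ξ⟫`. -/
def face {n : ℕ} (K : Set (EuclideanSpace ℝ (Fin n))) (ξ : EuclideanSpace ℝ (Fin n)) :
    Set (EuclideanSpace ℝ (Fin n)) :=
  {x ∈ K | ∀ y ∈ K, ⟪y, ξ⟫ ≤ ⟪x, ξ⟫}

/-- The `i`-th standard basis vector of `ℝⁿ`. -/
def stdVec (n : ℕ) (i : Fin n) : EuclideanSpace ℝ (Fin n) := EuclideanSpace.single i 1

/-- The all-ones vector `S = (1,…,1)`. -/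
def allOnes (n : ℕ) : EuclideanSpace ℝ (Fin n) := WithLp.toLp 2 (fun _ => 1)

/-- The segment `q_{ij} = [e_i, e_j]`. -/
def qseg (n : ℕ) (i j : Fin n) : Set (EuclideanSpace ℝ (Fin n)) :=
  segment ℝ (stdVec n i) (stdVec n j)

/-- The point `R_i = n·e_i − Σ_j e_j` (coordinate `n−1` at position `i`, `−1` elsewhere). -/
def Rpt (n : ℕ) (i : Fin n) : EuclideanSpace ℝ (Fin n) := (n : ℝ) • stdVec n i - allOnes n

/-- The segment `r_i = [0, R_i]`. -/
def rseg (n : ℕ) (i : Fin n) : Set (EuclideanSpace ℝ (Fin n)) := segment ℝ 0 (Rpt n i)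

/-- The standard permutohedron `Π_n`: the convex hull of all points obtained by
permuting the coordinates of `(1, 2, …, n)`. -/
def permutohedron (n : ℕ) : Set (EuclideanSpace ℝ (Fin n)) :=
  convexHull ℝ
    {x : EuclideanSpace ℝ (Fin n) | ∃ σ : Equiv.Perm (Fin n), ∀ i, x i = ((σ i : ℕ) : ℝ) + 1}

open Finset

theorem StrictMono.sum_mul_comp_perm_lt_sum_mul {ι α : Type*} [LinearOrder ι] [Fintype ι]
    [Semiring α] [LinearOrder α] [IsStrictOrderedRing α] [ExistsAddOfLE α] {f g : ι → α}
    (hf : StrictMono f) (hg : StrictMono g) {σ : Equiv.Perm ι} (hσ : σ ≠ 1) :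
    ∑ i, f i * g (σ i) < ∑ i, f i * g i := by
  refine (hf.monotone.monovary hg.monotone).sum_mul_comp_perm_lt_sum_mul_iff.2 fun h => hσ ?_
  have hσ_mono : Monotone σ := fun i j hij => hg.le_iff_le.1 (hf.trans_monovary h.symm hij)
  exact Equiv.ext (congrFun (hσ_mono.strictMono_of_injective σ.injective).eq_id)

section HalfSpace

variable {𝕜 E : Type*} [Field 𝕜] [LinearOrder 𝕜] [IsStrictOrderedRing 𝕜] [AddCommGroup E]
  [Module 𝕜 E]

theorem convex_insert_setOf_lt (f : E →ₗ[𝕜] 𝕜) (u : E) :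
    Convex 𝕜 (insert u {x | f x < f u}) := by
  refine convex_iff_forall_pos.2 ?_
  rintro x (rfl | hx) y (rfl | hy) a b ha hb hab
  · exact Or.inl (by rw [← add_smul, hab, one_smul])
  all_goals
    refine Or.inr ?_
    obtain rfl := eq_sub_of_add_eq hab
    simp only [Set.mem_ofPred_eq, map_add, map_smul, smul_eq_mul] at *
    nlinarith

theorem convexHull_subset_insert_setOf_lt (f : E →ₗ[𝕜] 𝕜) {S : Set E} {u : E}
    (hS : ∀ y ∈ S, y ≠ u → f y < f u) : convexHull 𝕜 S ⊆ insert u {x | f x < f u} :=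
  convexHull_min (fun y hy => (eq_or_ne y u).imp id (hS y hy)) (convex_insert_setOf_lt f u)

end HalfSpace

theorem face_convexHull_eq_singleton {n : ℕ} {S : Set (EuclideanSpace ℝ (Fin n))}
    {u ξ : EuclideanSpace ℝ (Fin n)} (hu : u ∈ S) (hS : ∀ y ∈ S, y ≠ u → ⟪y, ξ⟫ < ⟪u, ξ⟫) :
    face (convexHull ℝ S) ξ = {u} := by
  have hsub := convexHull_subset_insert_setOf_lt (innerₗ _ ξ) (S := S) (u := u)
    (by simpa [real_inner_comm] using hS)
  simp only [innerₗ_apply_apply, ← real_inner_comm ξ] at hsub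
  have hu' := subset_convexHull ℝ S hu
  ext x
  constructor
  · rintro ⟨hx, hmax⟩
    exact (hsub hx).resolve_right fun hlt => (hmax u hu').not_gt hlt
  · rintro rfl
    refine ⟨hu', fun y hy => ?_⟩
    rcases hsub hy with rfl | hlt
    exacts [le_rfl, hlt.le]

def permutohedronVertex {n : ℕ} (σ : Equiv.Perm (Fin n)) : EuclideanSpace ℝ (Fin n) :=
  WithLp.toLp 2 fun i => ((σ i : ℕ) : ℝ) + 1

theorem permutohedron_eq_convexHull_range (n : ℕ) :
    permutohedron n = convexHull ℝ (Set.range (permutohedronVertex (n := n))) := by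
  unfold permutohedron
  congr 1
  ext x
  simp only [Set.mem_range, Set.mem_ofPred_eq, PiLp.ext_iff, permutohedronVertex,
    eq_comm]

theorem inner_permutohedronVertex {n : ℕ} (σ : Equiv.Perm (Fin n)) (ξ : EuclideanSpace ℝ (Fin n)) :
    ⟪permutohedronVertex σ, ξ⟫ = ∑ i, ξ i * (((σ i : ℕ) : ℝ) + 1) := by
  simp [PiLp.inner_apply, permutohedronVertex]

theorem face_permutohedron_eq_singleton {n : ℕ} {c : Fin n → ℝ} (hc : StrictMono c)
    (π : Equiv.Perm (Fin n)) :
    face (permutohedron n) (WithLp.toLp 2 (c ∘ π)) = {permutohedronVertex π} := by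
  rw [permutohedron_eq_convexHull_range]
  refine face_convexHull_eq_singleton ⟨π, rfl⟩ ?_
  rintro _ ⟨τ, rfl⟩ hτπ
  have hne : π.symm.trans τ ≠ 1 := fun h =>
    hτπ (congrArg _ (Equiv.ext fun i => by simpa using DFunLike.congr_fun h (π i)))
  have hg : StrictMono fun k : Fin n => ((k : ℕ) : ℝ) + 1 := fun a b hab => by simpa using hab
  have key := hc.sum_mul_comp_perm_lt_sum_mul hg hne
  rw [inner_permutohedronVertex, inner_permutohedronVertex, ← Equiv.sum_comp π.symm,
    ← Equiv.sum_comp π.symm (fun i => _ * (((π i : ℕ) : ℝ) + 1))]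
  simpa using key

theorem permutohedronVertex_sub_Rpt {m : ℕ} (π : Equiv.Perm (Fin (m + 1))) :
    permutohedronVertex π - Rpt (m + 1) (π.symm (Fin.last m)) =
      permutohedronVertex (π.trans (finRotate (m + 1))) := by
  ext i
  simp only [permutohedronVertex, Rpt, stdVec, allOnes, PiLp.sub_apply, PiLp.smul_apply,
    PiLp.toLp_apply, PiLp.single_apply, Equiv.trans_apply, coe_finRotate, Equiv.eq_symm_apply]
  split_ifs with h
  · simp [h]
  · push_cast; ring

section GeomSum

variable {b : ℝ}

theorem sum_fin_pow_lt_pow (hb : 2 ≤ b) (N : ℕ) : ∑ k : Fin N, b ^ (k : ℕ) < b ^ N := by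
  rw [Fin.sum_univ_eq_sum_range (b ^ ·)]
  have hmul := geom_sum_mul b N
  have hnonneg : 0 ≤ ∑ i ∈ range N, b ^ i := sum_nonneg fun i _ => by positivity
  nlinarith

theorem mul_pow_lt_sum_fin_pow (hb : 1 ≤ b) {N : ℕ} {k : Fin (N + 1)} (hk : k ≠ Fin.last N) :
    b * b ^ (k : ℕ) < ∑ j : Fin (N + 1), b ^ (j : ℕ) := by
  rw [Fin.sum_univ_castSucc, Fin.val_last]
  have hle : b * b ^ (k : ℕ) ≤ b ^ N := by
    rw [← pow_succ']
    exact pow_le_pow_right₀ hb (Fin.val_lt_last hk)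
  have hpos : 0 < ∑ j : Fin N, b ^ (j.castSucc : ℕ) :=
    sum_pos (fun j _ => by positivity) (univ_nonempty_iff.2 ⟨⟨0, by omega⟩⟩)
  linarith

theorem sum_fin_pow_lt_mul_pow_iff (hb : 2 ≤ b) {N : ℕ} (k : Fin (N + 1)) :
    ∑ j : Fin (N + 1), b ^ (j : ℕ) < b * b ^ (k : ℕ) ↔ k = Fin.last N := by
  refine ⟨fun h => not_not.1 fun hk => (mul_pow_lt_sum_fin_pow (by linarith) hk).not_gt h, ?_⟩
  rintro rfl
  rw [Fin.val_last, ← pow_succ']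
  exact sum_fin_pow_lt_pow hb (N + 1)

theorem mul_pow_ne_sum_fin_pow (hb : 2 ≤ b) {N : ℕ} (k : Fin (N + 1)) :
    b * b ^ (k : ℕ) ≠ ∑ j : Fin (N + 1), b ^ (j : ℕ) := by
  by_cases hk : k = Fin.last N
  · exact ((sum_fin_pow_lt_mul_pow_iff hb k).2 hk).ne'
  · exact (mul_pow_lt_sum_fin_pow (by linarith) hk).ne

end GeomSum

/-- Every vertex of the permutohedron arises as a vertex of the
cyclopermutohedron: for every point `v` whose coordinates are a permutation of
`(1, …, n)` there is a diagonal-free `ξ` with pairwise distinct coordinates such that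
`Π_n^ξ = {u}` and `u − Σ_{i : n·ξ_i > Σ_j ξ_j} R_i = v`. -/
theorem vertices_of_cyclopermutohedron (n : ℕ) (hn : 3 ≤ n)
    (v : EuclideanSpace ℝ (Fin n))
    (hv : ∃ σ : Equiv.Perm (Fin n), ∀ i, v i = ((σ i : ℕ) : ℝ) + 1) :
    ∃ ξ : EuclideanSpace ℝ (Fin n),
      (∀ i j : Fin n, i ≠ j → ξ i ≠ ξ j) ∧
      (∀ i : Fin n, (n : ℝ) * ξ i ≠ ∑ j, ξ j) ∧
      ∃ u : EuclideanSpace ℝ (Fin n),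
        face (permutohedron n) ξ = {u} ∧
        u - ∑ i ∈ Finset.univ.filter (fun i : Fin n => (∑ j, ξ j) < (n : ℝ) * ξ i), Rpt n i
          = v := by
  obtain ⟨m, rfl⟩ : ∃ m, n = m + 1 := ⟨n - 1, by omega⟩
  obtain ⟨σ, hσ⟩ := hv
  set b : ℝ := ((m + 1 : ℕ) : ℝ)
  have hb : 2 ≤ b := Nat.ofNat_le_cast.2 (by omega)
  have hc : StrictMono fun k : Fin (m + 1) => b ^ (k : ℕ) :=
    (pow_right_strictMono₀ (by linarith)).comp Fin.val_strictMono
  set π := σ.trans (finRotate (m + 1)).symm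
  set ξ : EuclideanSpace ℝ (Fin (m + 1)) := WithLp.toLp 2 ((fun k : Fin (m + 1) => b ^ (k : ℕ)) ∘ π)
  have hξ_sum : ∑ j, ξ j = ∑ k : Fin (m + 1), b ^ (k : ℕ) :=
    Equiv.sum_comp π fun k => b ^ (k : ℕ)
  have htop : univ.filter (fun i => ∑ j, ξ j < b * ξ i) = {π.symm (Fin.last m)} := by
    ext i
    simp only [mem_filter, mem_univ, true_and, mem_singleton, hξ_sum, Equiv.eq_symm_apply]
    exact sum_fin_pow_lt_mul_pow_iff hb (π i)
  refine ⟨ξ, fun i j hij h => hij (π.injective (hc.injective h)),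
    fun i => hξ_sum ▸ mul_pow_ne_sum_fin_pow hb (π i), permutohedronVertex π,
    face_permutohedron_eq_singleton hc π, ?_⟩
  rw [htop, sum_singleton, permutohedronVertex_sub_Rpt,
    show π.trans (finRotate (m + 1)) = σ by ext; simp [π]]
  ext i
  simp [permutohedronVertex, hσ]
end
end

section
/- Edge criterion for the permutohedron: let v, w ∈ ℝ^n be two distinct points whose coordinates are permutations of (1, 2, …, n). Then there exists a nonzero ξ ∈ ℝ^n such that Π_n^ξ equals the segment [v, w] if and only if there exist indices i ≠ j with v_i = w_j, v_j = w_i, |v_i − v_j| = 1, and v_l = w_l for all l ∉ {i, j} (i.e. w is obtained from v by permuting two neighbor entries). -/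
open scoped Pointwise RealInnerProductSpace BigOperators

noncomputable section

/-!
Faces of a convex hull are convex hulls of faces of the generating set, since a maximizer is a
convex combination of maximizers. The vertices of `Π_n` all lie on one sphere, so no vertex lies
strictly inside `[v, w]`; hence `Π_n^ξ = [v, w]` exactly when `ξ`, on the vertex set, is maximized
exactly at `v` and `w`.

Swapping the coordinates `a, b` of a vertex `x` changes `⟪x, ξ⟫` by `(x b - x a) * (ξ a - ξ b)`,
so a maximizing vertex orders its coordinates as `ξ` does, and swapping two coordinates on which
`ξ` agrees produces another maximizer. Conversely, distinct vertices are at squared distance at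
least `2`, with equality for neighbours, and on a sphere of radius `r` one has
`2 ⟪x, v + w⟫ = 4 r² - ‖x - v‖² - ‖x - w‖²`, so `v + w` is maximized exactly at `v` and `w`.
-/

lemma eq_or_eq_of_mem_segment_of_norm_eq {E : Type*} [NormedAddCommGroup E] [NormedSpace ℝ E]
    [StrictConvexSpace ℝ E] {u v w : E} (h : u ∈ segment ℝ v w) (hv : ‖v‖ = ‖u‖)
    (hw : ‖w‖ = ‖u‖) : u = v ∨ u = w := by
  by_contra! hne
  have := Sbtw.dist_lt_max_dist (0 : E) ⟨mem_segment_iff_wbtw.1 h, hne.1, hne.2⟩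
  rw [dist_zero_right, dist_zero_right, dist_zero_right, hv, hw, max_self] at this
  exact lt_irrefl _ this

section Face

variable {n : ℕ}

lemma mem_face_of_subset {K s : Set (EuclideanSpace ℝ (Fin n))} {ξ x : EuclideanSpace ℝ (Fin n)}
    (hx : x ∈ face K ξ) (hxs : x ∈ s) (hsK : s ⊆ K) : x ∈ face s ξ :=
  ⟨hxs, fun y hy => hx.2 y (hsK hy)⟩

lemma Convex.face {K : Set (EuclideanSpace ℝ (Fin n))} (hK : Convex ℝ K)
    (ξ : EuclideanSpace ℝ (Fin n)) : Convex ℝ (face K ξ) := by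
  intro x hx y hy a b ha hb hab
  refine ⟨hK hx.1 hy.1 ha hb hab, fun z hz => ?_⟩
  rw [inner_add_left, real_inner_smul_left, real_inner_smul_left]
  calc ⟪z, ξ⟫ = a * ⟪z, ξ⟫ + b * ⟪z, ξ⟫ := by rw [← add_mul, hab, one_mul]
    _ ≤ a * ⟪x, ξ⟫ + b * ⟪y, ξ⟫ := by gcongr; exacts [hx.2 z hz, hy.2 z hz]

lemma face_subset_face_convexHull (s : Set (EuclideanSpace ℝ (Fin n)))
    (ξ : EuclideanSpace ℝ (Fin n)) : face s ξ ⊆ face (convexHull ℝ s) ξ := by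
  refine fun x hx => ⟨subset_convexHull ℝ s hx.1, fun y hy => ?_⟩
  have hhalf : Convex ℝ {y : EuclideanSpace ℝ (Fin n) | ⟪y, ξ⟫ ≤ ⟪x, ξ⟫} :=
    convex_halfSpace_le ⟨fun u v => inner_add_left u v ξ, fun r u => real_inner_smul_left u ξ r⟩ _
  exact convexHull_min hx.2 hhalf hy

lemma face_convexHull (s : Set (EuclideanSpace ℝ (Fin n))) (ξ : EuclideanSpace ℝ (Fin n)) :
    face (convexHull ℝ s) ξ = convexHull ℝ (face s ξ) := by
  classical
  refine Set.Subset.antisymm ?_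
    (convexHull_min (face_subset_face_convexHull s ξ) ((convex_convexHull ℝ s).face ξ))
  rintro x ⟨hx, hxmax⟩
  obtain ⟨ι, t, c, z, hc₀, hc₁, hzs, hxc⟩ := (convexHull_eq s).subset hx
  have hinner : ∑ i ∈ t, c i * ⟪z i, ξ⟫ = ∑ i ∈ t, c i * ⟪x, ξ⟫ := by
    rw [← Finset.sum_mul, hc₁, one_mul, ← hxc, Finset.centerMass_eq_of_sum_1 _ _ hc₁, sum_inner]
    simp only [real_inner_smul_left]
  have hface : ∀ i ∈ t, c i ≠ 0 → z i ∈ face s ξ := by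
    intro i hi hci
    have hle : ∀ j ∈ t, c j * ⟪z j, ξ⟫ ≤ c j * ⟪x, ξ⟫ := fun j hj =>
      mul_le_mul_of_nonneg_left (hxmax _ (subset_convexHull ℝ s (hzs j hj))) (hc₀ j hj)
    have hzx : ⟪z i, ξ⟫ = ⟪x, ξ⟫ :=
      mul_left_cancel₀ hci ((Finset.sum_eq_sum_iff_of_le hle).1 hinner i hi)
    exact ⟨hzs i hi, fun y hy => hzx ▸ hxmax y (subset_convexHull ℝ s hy)⟩
  rw [← hxc, ← Finset.centerMass_filter_ne_zero]
  refine Finset.centerMass_mem_convexHull _ (fun i hi => hc₀ i (Finset.mem_filter.1 hi).1) ?_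
    (fun i hi => hface i (Finset.mem_filter.1 hi).1 (Finset.mem_filter.1 hi).2)
  rw [Finset.sum_filter_ne_zero, hc₁]
  exact one_pos

lemma face_convexHull_eq_segment_iff {S : Set (EuclideanSpace ℝ (Fin n))}
    {v w ξ : EuclideanSpace ℝ (Fin n)} (hnorm : ∀ x ∈ S, ‖x‖ = ‖v‖) (hv : v ∈ S) (hw : w ∈ S) :
    face (convexHull ℝ S) ξ = segment ℝ v w ↔ face S ξ = {v, w} := by
  refine ⟨fun h => subset_antisymm (fun u hu => ?_) ?_, fun h => ?_⟩
  · have hu' : u ∈ segment ℝ v w := h ▸ face_convexHull S ξ ▸ subset_convexHull ℝ _ hu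
    have hu := hnorm u hu.1
    exact eq_or_eq_of_mem_segment_of_norm_eq hu' hu.symm ((hnorm w hw).trans hu.symm)
  · have hsub : segment ℝ v w ⊆ face (convexHull ℝ S) ξ := h.ge
    exact Set.insert_subset
      (mem_face_of_subset (hsub (left_mem_segment ℝ v w)) hv (subset_convexHull ℝ S))
      (Set.singleton_subset_iff.2
        (mem_face_of_subset (hsub (right_mem_segment ℝ v w)) hw (subset_convexHull ℝ S)))
  · rw [face_convexHull, h, convexHull_pair]

lemma face_add_eq_pair {S : Set (EuclideanSpace ℝ (Fin n))}
    {v w : EuclideanSpace ℝ (Fin n)} (hv : v ∈ S) (hw : w ∈ S) (hvw : v ≠ w)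
    (hnorm : ∀ x ∈ S, ‖x‖ = ‖v‖) (hmin : ∀ x ∈ S, ∀ y ∈ S, x ≠ y → ‖v - w‖ ≤ ‖x - y‖) :
    face S (v + w) = {v, w} := by
  have hval : ∀ x ∈ S, 2 * ⟪x, v + w⟫ = 4 * ‖v‖ ^ 2 - ‖x - v‖ ^ 2 - ‖x - w‖ ^ 2 := by
    intro x hx
    rw [norm_sub_sq_real, norm_sub_sq_real, inner_add_right, hnorm x hx, hnorm w hw]
    ring
  have hv_val : 2 * ⟪v, v + w⟫ = 4 * ‖v‖ ^ 2 - ‖v - w‖ ^ 2 := by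
    rw [hval v hv, sub_self, norm_zero]; ring
  have hw_val : 2 * ⟪w, v + w⟫ = 4 * ‖v‖ ^ 2 - ‖v - w‖ ^ 2 := by
    rw [hval w hw, sub_self, norm_zero, norm_sub_rev]; ring
  have hlt : ∀ x ∈ S, x ≠ v → x ≠ w → ⟪x, v + w⟫ < ⟪v, v + w⟫ := by
    intro x hx hxv hxw
    have hd : 0 < ‖v - w‖ := norm_pos_iff.2 (sub_ne_zero.2 hvw)
    have h₁ := pow_le_pow_left₀ hd.le (hmin x hx v hv hxv) 2
    have h₂ := pow_le_pow_left₀ hd.le (hmin x hx w hw hxw) 2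
    nlinarith [hval x hx]
  ext x
  simp only [Set.mem_insert_iff, Set.mem_singleton_iff]
  constructor
  · rintro ⟨hx, hxmax⟩
    by_contra! hne
    exact (hxmax v hv).not_gt (hlt x hx hne.1 hne.2)
  · have hle : ∀ y ∈ S, ⟪y, v + w⟫ ≤ ⟪v, v + w⟫ := by
      intro y hy
      by_cases hyv : y = v
      · rw [hyv]
      by_cases hyw : y = w
      · rw [hyw]; linarith
      exact (hlt y hy hyv hyw).le
    rintro (rfl | rfl)
    · exact ⟨hv, hle⟩
    · exact ⟨hw, fun y hy => (hle y hy).trans (by linarith)⟩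

end Face

lemma norm_sub_sq_eq_of_swap {n : ℕ} {v w : EuclideanSpace ℝ (Fin n)} {i j : Fin n} (hij : i ≠ j)
    (hvi : v i = w j) (hvj : v j = w i) (hrest : ∀ l, l ≠ i → l ≠ j → v l = w l) :
    ‖v - w‖ ^ 2 = 2 * (v i - v j) ^ 2 := by
  rw [EuclideanSpace.real_norm_sq_eq, Fintype.sum_eq_add i j hij fun l hl => by
    rw [PiLp.sub_apply, hrest l hl.1 hl.2, sub_self, zero_pow two_ne_zero]]
  simp only [PiLp.sub_apply, ← hvi, ← hvj]
  ring

def permVertices (n : ℕ) : Set (EuclideanSpace ℝ (Fin n)) :=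
  {x | ∃ σ : Equiv.Perm (Fin n), ∀ i, x i = ((σ i : ℕ) : ℝ) + 1}

lemma permutohedron_eq_convexHull (n : ℕ) :
    permutohedron n = convexHull ℝ (permVertices n) :=
  rfl

def swapCoords {n : ℕ} (a b : Fin n) (x : EuclideanSpace ℝ (Fin n)) :
    EuclideanSpace ℝ (Fin n) :=
  WithLp.toLp 2 fun l => x (Equiv.swap a b l)

section PermVertices

variable {n : ℕ} {x y : EuclideanSpace ℝ (Fin n)}

@[simp]
lemma swapCoords_apply (a b l : Fin n) (x : EuclideanSpace ℝ (Fin n)) :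
    swapCoords a b x l = x (Equiv.swap a b l) :=
  rfl

lemma inner_swapCoords (a b : Fin n) (x ξ : EuclideanSpace ℝ (Fin n)) :
    ⟪swapCoords a b x, ξ⟫ = ⟪x, ξ⟫ + (x b - x a) * (ξ a - ξ b) := by
  rcases eq_or_ne a b with rfl | hab
  · simp [swapCoords]
  have hdiff : ∑ l, ξ l * (swapCoords a b x l - x l) = (x b - x a) * (ξ a - ξ b) := by
    rw [Fintype.sum_eq_add a b hab fun l hl => by
      rw [swapCoords_apply, Equiv.swap_apply_of_ne_of_ne hl.1 hl.2, sub_self, mul_zero]]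
    simp only [swapCoords_apply, Equiv.swap_apply_left, Equiv.swap_apply_right]
    ring
  simp only [PiLp.inner_apply, RCLike.inner_apply, conj_trivial]
  rw [← hdiff, ← Finset.sum_add_distrib]
  exact Finset.sum_congr rfl fun l _ => by ring

lemma swapCoords_mem_permVertices (hx : x ∈ permVertices n) (a b : Fin n) :
    swapCoords a b x ∈ permVertices n := by
  obtain ⟨σ, hσ⟩ := hx
  exact ⟨(Equiv.swap a b).trans σ, fun l => hσ _⟩

lemma injective_of_mem_permVertices (hx : x ∈ permVertices n) : Function.Injective x := by
  obtain ⟨σ, hσ⟩ := hx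
  intro a b h
  simp only [hσ, add_left_inj, Nat.cast_inj] at h
  exact σ.injective (Fin.ext h)

lemma sum_comp_of_mem_permVertices (hx : x ∈ permVertices n) (f : ℝ → ℝ) :
    ∑ i, f (x i) = ∑ i : Fin n, f ((i : ℕ) + 1) := by
  obtain ⟨σ, hσ⟩ := hx
  simp only [hσ]
  exact Equiv.sum_comp σ fun i : Fin n => f ((i : ℕ) + 1)

lemma norm_eq_of_mem_permVertices (hx : x ∈ permVertices n) (hy : y ∈ permVertices n) :
    ‖x‖ = ‖y‖ := by
  refine (sq_eq_sq₀ (norm_nonneg _) (norm_nonneg _)).1 ?_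
  rw [EuclideanSpace.real_norm_sq_eq, EuclideanSpace.real_norm_sq_eq]
  exact (sum_comp_of_mem_permVertices hx (· ^ 2)).trans
    (sum_comp_of_mem_permVertices hy (· ^ 2)).symm

lemma one_le_sq_sub_of_mem_permVertices (hx : x ∈ permVertices n) (hy : y ∈ permVertices n)
    {l : Fin n} (hl : x l ≠ y l) : 1 ≤ (x l - y l) ^ 2 := by
  obtain ⟨σ, hσ⟩ := hx
  obtain ⟨τ, hτ⟩ := hy
  rw [hσ, hτ] at hl ⊢
  have hne : (σ l : ℕ) ≠ τ l := fun h => hl (by rw [h])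
  have hint : (1 : ℤ) ≤ ((σ l : ℕ) - (τ l : ℕ) : ℤ) ^ 2 := by
    rcases Nat.lt_or_gt_of_ne hne with h | h <;> nlinarith
  calc (1 : ℝ) ≤ (((σ l : ℕ) - (τ l : ℕ) : ℤ) : ℝ) ^ 2 := by exact_mod_cast hint
    _ = _ := by push_cast; ring

/-- Two distinct vertices differ in at least two coordinates, since their coordinate sums agree. -/
lemma two_le_norm_sub_sq_of_mem_permVertices (hx : x ∈ permVertices n)
    (hy : y ∈ permVertices n) (hxy : x ≠ y) : 2 ≤ ‖x - y‖ ^ 2 := by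
  classical
  obtain ⟨a, ha⟩ : ∃ a, x a ≠ y a := by
    by_contra! h
    exact hxy (PiLp.ext h)
  obtain ⟨b, hba, hb⟩ : ∃ b, b ≠ a ∧ x b ≠ y b := by
    by_contra! h
    have hsum : ∑ l, x l = ∑ l, y l :=
      (sum_comp_of_mem_permVertices hx id).trans (sum_comp_of_mem_permVertices hy id).symm
    rw [← Finset.add_sum_erase _ _ (Finset.mem_univ a),
      ← Finset.add_sum_erase _ _ (Finset.mem_univ a),
      Finset.sum_congr rfl fun l hl => h l (Finset.ne_of_mem_erase hl)] at hsum
    exact ha (add_right_cancel hsum)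
  rw [EuclideanSpace.real_norm_sq_eq]
  calc (2 : ℝ) ≤ (x a - y a) ^ 2 + (x b - y b) ^ 2 := by
        linarith [one_le_sq_sub_of_mem_permVertices hx hy ha,
          one_le_sq_sub_of_mem_permVertices hx hy hb]
    _ = ∑ l ∈ {a, b}, ((x - y) l) ^ 2 := by
        rw [Finset.sum_pair hba.symm]; rfl
    _ ≤ ∑ l, ((x - y) l) ^ 2 :=
        Finset.sum_le_sum_of_subset_of_nonneg (Finset.subset_univ _) fun _ _ _ => sq_nonneg _

lemma exists_between_of_mem_permVertices (hx : x ∈ permVertices n) {a b : Fin n}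
    (h : x a + 1 < x b) : ∃ m, x a < x m ∧ x m < x b := by
  obtain ⟨σ, hσ⟩ := hx
  rw [hσ, hσ] at h
  have h' : (σ a : ℕ) + 1 < σ b := by exact_mod_cast (by linarith : ((σ a : ℕ) : ℝ) + 1 < (σ b : ℕ))
  refine ⟨σ.symm ⟨σ a + 1, h'.trans (σ b).isLt⟩, ?_, ?_⟩ <;>
    simp only [hσ, Equiv.apply_symm_apply, Nat.cast_add, Nat.cast_one] <;> linarith

lemma add_one_lt_or_add_one_lt_of_mem_permVertices (hx : x ∈ permVertices n) {a b : Fin n}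
    (hab : a ≠ b) (h : |x a - x b| ≠ 1) : x a + 1 < x b ∨ x b + 1 < x a := by
  obtain ⟨σ, hσ⟩ := hx
  rw [hσ, hσ] at h ⊢
  have hne : (σ a : ℕ) ≠ σ b := fun h => hab (σ.injective (Fin.ext h))
  have hab' : (σ a : ℕ) + 1 ≠ σ b := by
    rintro heq; apply h; rw [← heq]; norm_num
  have hba' : (σ b : ℕ) + 1 ≠ σ a := by
    rintro heq; apply h; rw [← heq]; norm_num
  have : (σ a : ℕ) + 1 < σ b ∨ (σ b : ℕ) + 1 < σ a := by omega
  rcases this with h | h <;> [left; right] <;>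
  · have := (Nat.cast_lt (α := ℝ)).2 h
    push_cast at this
    linarith

lemma eq_of_lt_imp_lt_of_mem_permVertices (hx : x ∈ permVertices n) (hy : y ∈ permVertices n)
    (h : ∀ a b, x a < x b → y a < y b) : x = y := by
  obtain ⟨σ, hσ⟩ := hx
  obtain ⟨τ, hτ⟩ := hy
  have hmono : StrictMono (τ ∘ σ.symm) := by
    intro k l hkl
    have := h (σ.symm k) (σ.symm l)
    simp only [hσ, hτ, Equiv.apply_symm_apply, add_lt_add_iff_right, Nat.cast_lt] at this
    exact this hkl
  have hστ : ∀ i, τ i = σ i := fun i => by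
    simpa using congrFun hmono.eq_id (σ i)
  exact PiLp.ext fun i => by rw [hσ, hτ, hστ]

lemma pos_of_mem_permVertices (hx : x ∈ permVertices n) (i : Fin n) : 0 < x i := by
  obtain ⟨σ, hσ⟩ := hx
  rw [hσ]
  positivity

end PermVertices

section FacePermVertices

variable {n : ℕ} {v w x ξ : EuclideanSpace ℝ (Fin n)} {a b : Fin n}

lemma lt_of_mem_face_permVertices (hx : x ∈ face (permVertices n) ξ) (h : ξ a < ξ b) :
    x a < x b := by
  have hle := hx.2 _ (swapCoords_mem_permVertices hx.1 a b)
  rw [inner_swapCoords] at hle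
  have hab : a ≠ b := fun hab => h.ne (by rw [hab])
  rcases ((injective_of_mem_permVertices hx.1).ne hab).lt_or_gt with hlt | hgt
  · exact hlt
  · nlinarith

lemma swapCoords_mem_face_permVertices (hx : x ∈ face (permVertices n) ξ) (h : ξ a = ξ b) :
    swapCoords a b x ∈ face (permVertices n) ξ := by
  refine ⟨swapCoords_mem_permVertices hx.1 a b, fun y hy => ?_⟩
  rw [inner_swapCoords, h, sub_self, mul_zero, add_zero]
  exact hx.2 y hy

lemma swapCoords_eq_of_face_eq_pair (hface : face (permVertices n) ξ = {v, w}) (hab : a ≠ b)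
    (h : ξ a = ξ b) : swapCoords a b v = w := by
  have hv : v ∈ face (permVertices n) ξ := hface ▸ Set.mem_insert v {w}
  have hmem : swapCoords a b v ∈ ({v, w} : Set _) := hface ▸ swapCoords_mem_face_permVertices hv h
  rcases hmem with hsv | hsw
  · have hba : v b = v a := by simpa using congrArg (· a) hsv
    exact absurd (injective_of_mem_permVertices hv.1 hba) hab.symm
  · exact hsw

/-- If `ξ` had pairwise distinct coordinates, both `v` and `w` would order their coordinates
like `ξ`, forcing `v = w`. -/
lemma exists_eq_swapCoords_of_face_eq_pair (hface : face (permVertices n) ξ = {v, w})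
    (hvw : v ≠ w) : ∃ i j, i ≠ j ∧ ξ i = ξ j ∧ swapCoords i j v = w := by
  obtain ⟨i, j, hij, hξ⟩ : ∃ i j, i ≠ j ∧ ξ i = ξ j := by
    by_contra! hξinj
    have hv : v ∈ face (permVertices n) ξ := hface ▸ Set.mem_insert v {w}
    have hw : w ∈ face (permVertices n) ξ := hface ▸ Set.mem_insert_of_mem v rfl
    refine hvw (eq_of_lt_imp_lt_of_mem_permVertices hv.1 hw.1 fun a b hab => ?_)
    apply lt_of_mem_face_permVertices hw
    rcases lt_trichotomy (ξ a) (ξ b) with h | h | h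
    · exact h
    · exact absurd h (hξinj a b fun e => hab.ne (by rw [e]))
    · exact absurd (lt_of_mem_face_permVertices hv h) hab.asymm
  exact ⟨i, j, hij, hξ, swapCoords_eq_of_face_eq_pair hface hij hξ⟩

/-- A coordinate `m` of `v` strictly between `v a` and `v b` would have `ξ m = ξ a`, and then
`w` would be both `v` with `a, b` swapped and `v` with `a, m` swapped. -/
lemma not_add_one_lt_of_face_eq_pair (hface : face (permVertices n) ξ = {v, w}) (hab : a ≠ b)
    (h : ξ a = ξ b) : ¬v a + 1 < v b := by
  intro hlt
  have hv : v ∈ face (permVertices n) ξ := hface ▸ Set.mem_insert v {w}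
  obtain ⟨m, ham, hmb⟩ := exists_between_of_mem_permVertices hv.1 hlt
  have hξm : ξ a = ξ m := le_antisymm
    (not_lt.1 fun h' => (lt_of_mem_face_permVertices hv h').asymm ham)
    (h ▸ not_lt.1 fun h' => (lt_of_mem_face_permVertices hv h').asymm hmb)
  have hbm : b ≠ m := fun e => hmb.ne (by rw [e])
  have hvb := congrArg (· b) ((swapCoords_eq_of_face_eq_pair hface (fun e => ham.ne (by rw [e]))
    hξm).trans (swapCoords_eq_of_face_eq_pair hface hab h).symm)
  simp only [swapCoords_apply, Equiv.swap_apply_of_ne_of_ne hab.symm hbm,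
    Equiv.swap_apply_right] at hvb
  linarith

lemma abs_sub_eq_one_of_face_eq_pair (hface : face (permVertices n) ξ = {v, w}) (hab : a ≠ b)
    (h : ξ a = ξ b) : |v a - v b| = 1 := by
  have hv : v ∈ permVertices n := (hface ▸ Set.mem_insert v {w} : v ∈ face _ ξ).1
  by_contra habs
  rcases add_one_lt_or_add_one_lt_of_mem_permVertices hv hab habs with hlt | hlt
  exacts [not_add_one_lt_of_face_eq_pair hface hab h hlt,
    not_add_one_lt_of_face_eq_pair hface hab.symm h.symm hlt]

end FacePermVertices

theorem exists_face_permVertices_eq_pair_iff {n : ℕ} {v w : EuclideanSpace ℝ (Fin n)}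
    (hv : v ∈ permVertices n) (hw : w ∈ permVertices n) (hvw : v ≠ w) :
    (∃ ξ, ξ ≠ 0 ∧ face (permVertices n) ξ = {v, w}) ↔
      ∃ i j : Fin n, i ≠ j ∧ v i = w j ∧ v j = w i ∧ |v i - v j| = 1 ∧
        ∀ l : Fin n, l ≠ i → l ≠ j → v l = w l := by
  constructor
  · rintro ⟨ξ, -, hface⟩
    obtain ⟨i, j, hij, hξ, rfl⟩ := exists_eq_swapCoords_of_face_eq_pair hface hvw
    refine ⟨i, j, hij, by simp, by simp, abs_sub_eq_one_of_face_eq_pair hface hij hξ,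
      fun l hli hlj => by simp [Equiv.swap_apply_of_ne_of_ne hli hlj]⟩
  · rintro ⟨i, j, hij, hvi, hvj, habs, hrest⟩
    have hvw_sq : ‖v - w‖ ^ 2 = 2 := by
      rw [norm_sub_sq_eq_of_swap hij hvi hvj hrest, ← sq_abs, habs]
      norm_num
    have hξ : v + w ≠ 0 := fun h => by
      have := congrArg (· i) h
      simp only [PiLp.add_apply, PiLp.zero_apply] at this
      linarith [pos_of_mem_permVertices hv i, pos_of_mem_permVertices hw i]
    refine ⟨v + w, hξ, face_add_eq_pair hv hw hvw (fun x hx => norm_eq_of_mem_permVertices hx hv)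
      fun x hx y hy hxy => ?_⟩
    rw [← pow_le_pow_iff_left₀ (norm_nonneg _) (norm_nonneg _) two_ne_zero, hvw_sq]
    exact two_le_norm_sub_sq_of_mem_permVertices hx hy hxy

/-- Edge criterion for the permutohedron: two distinct vertices `v, w` of
`Π_n` span an edge (a face of the form `Π_n^ξ = [v, w]` for some `ξ ≠ 0`) if and only if
`w` is obtained from `v` by permuting two neighbor entries. -/
theorem permutohedron_edge_criterion (n : ℕ)
    (v w : EuclideanSpace ℝ (Fin n))
    (hv : ∃ σ : Equiv.Perm (Fin n), ∀ i, v i = ((σ i : ℕ) : ℝ) + 1)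
    (hw : ∃ σ : Equiv.Perm (Fin n), ∀ i, w i = ((σ i : ℕ) : ℝ) + 1)
    (hvw : v ≠ w) :
    (∃ ξ : EuclideanSpace ℝ (Fin n), ξ ≠ 0 ∧ face (permutohedron n) ξ = segment ℝ v w)
      ↔ ∃ i j : Fin n, i ≠ j ∧ v i = w j ∧ v j = w i ∧ |v i - v j| = 1 ∧
          ∀ l : Fin n, l ≠ i → l ≠ j → v l = w l := by
  have hv' : v ∈ permVertices n := hv
  have hw' : w ∈ permVertices n := hw
  simp only [permutohedron_eq_convexHull, face_convexHull_eq_segment_iff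
    (fun x hx => norm_eq_of_mem_permVertices hx hv') hv' hw']
  exact exists_face_permVertices_eq_pair_iff hv' hw' hvw
end
end
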